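/- arXiv:2408.16763 — 2 statements merged into one kernel-verified Lean document; each statement's English description precedes it below -/
import Mathlib

section
/- (Theorem 2, coverage from a confidence distribution.) Fix an observed sample y and define h : Θ → ℝ by h(θ) = F_θ(T(y,θ)), assumed measurable. Let G be a probability measure on Θ whose pushforward under h is the uniform distribution on [0,1] (the T-confidence-distribution property). Let α ∈ (0,1) and let S ⊆ [0,1] be a Borel set such that G({θ : h(θ) ∈ S}) ≥ 1−α. Then the Lebesgue measure of S is at least 1−α; consequently, if θ₀ ∈ Θ is such that F_{θ₀}(T(Y,θ₀)) is uniformly distributed on (0,1) when Y ∼ P_{θ₀}, then P_{θ₀}({y' : F_{θ₀}(T(y',θ₀)) ∈ S}) ≥ 1−α, i.e. the confidence set {θ : h(θ) ∈ S} built from G covers the true parameter with probability at least 1−α. -/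
open MeasureTheory

/-! The confidence set `{θ | h θ ∈ S}` is the `h`-preimage of `S`, so its `G`-mass is the mass of
`S` under the uniform law `G.map h`, i.e. the Lebesgue measure of `S`. Likewise, under `P θ₀` the
probability of `F θ₀ (T Y θ₀) ∈ S` is the Lebesgue measure of `S ∩ (0,1)`, which equals that of
`S` because the endpoints are null. -/

theorem measure_preimage_eq_of_map_eq_restrict {α β : Type*} [MeasurableSpace α]
    [MeasurableSpace β] {μ : Measure α} {ν : Measure β} {f : α → β} {A S : Set β}
    (hf : Measurable f) (hmap : μ.map f = ν.restrict A) (hS : MeasurableSet S) :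
    μ (f ⁻¹' S) = ν (S ∩ A) := by
  rw [← Measure.map_apply hf hS, hmap, Measure.restrict_apply hS]

theorem measure_inter_Ioo_eq_inter_Icc {α : Type*} [MeasurableSpace α] [PartialOrder α]
    {μ : Measure α} [NullSingletonClass μ] (S : Set α) (a b : α) :
    μ (S ∩ Set.Ioo a b) = μ (S ∩ Set.Icc a b) :=
  measure_congr (ae_eq_set_inter (Filter.EventuallyEq.refl _ S) Ioo_ae_eq_Icc)

theorem stmt_2_general {Y Θ : Type*} [MeasurableSpace Y] [MeasurableSpace Θ]
    (P : Θ → Measure Y)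
    (T : Y → Θ → ℝ)
    (F : Θ → ℝ → ℝ)
    (h : Θ → ℝ) (hmeas : Measurable h)
    (G : Measure Θ)
    (hG : G.map h = volume.restrict (Set.Icc (0 : ℝ) 1))
    (α : ℝ)
    (S : Set ℝ) (hS : MeasurableSet S) (hSsub : S ⊆ Set.Icc (0 : ℝ) 1)
    (hcov : ENNReal.ofReal (1 - α) ≤ G {θ | h θ ∈ S}) :
    ENNReal.ofReal (1 - α) ≤ volume S ∧
    ∀ θ₀ : Θ, Measurable (fun y' => F θ₀ (T y' θ₀)) →
      (P θ₀).map (fun y' => F θ₀ (T y' θ₀)) = volume.restrict (Set.Ioo (0 : ℝ) 1) →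
      ENNReal.ofReal (1 - α) ≤ (P θ₀) {y' | F θ₀ (T y' θ₀) ∈ S} := by
  have hvol : G {θ | h θ ∈ S} = volume S := by
    rw [← Set.preimage_ofPred_eq, Set.ofPred_mem_eq,
      measure_preimage_eq_of_map_eq_restrict hmeas hG hS, Set.inter_eq_left.2 hSsub]
  refine ⟨hvol ▸ hcov, fun θ₀ hm hmap => ?_⟩
  calc ENNReal.ofReal (1 - α) ≤ volume S := hvol ▸ hcov
    _ = volume (S ∩ Set.Icc 0 1) := by rw [Set.inter_eq_left.2 hSsub]
    _ = volume (S ∩ Set.Ioo 0 1) := (measure_inter_Ioo_eq_inter_Icc S 0 1).symm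
    _ = (P θ₀) {y' | F θ₀ (T y' θ₀) ∈ S} :=
      (measure_preimage_eq_of_map_eq_restrict hm hmap hS).symm

/-- **Theorem 2 (coverage from a confidence distribution).** Fix observed data `y` and
let `h θ = F θ (T y θ)`. If `G` is a probability measure on `Θ` whose pushforward under
`h` is the uniform distribution on `[0,1]` (the `T`-confidence-distribution property),
then for any `α ∈ (0,1)` and any Borel set `S ⊆ [0,1]` with `G {θ | h θ ∈ S} ≥ 1 - α`,
the Lebesgue measure of `S` is at least `1 - α`; consequently, for any `θ₀` such that
`F θ₀ (T ⬝ θ₀)` is uniformly distributed on `(0,1)` under `P θ₀`, the confidence set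
`{θ | h θ ∈ S}` covers `θ₀` with probability at least `1 - α`. -/
theorem stmt_2 {Y Θ : Type*} [MeasurableSpace Y] [MeasurableSpace Θ]
    (P : Θ → Measure Y) (hP : ∀ θ : Θ, IsProbabilityMeasure (P θ))
    (T : Y → Θ → ℝ)
    (F : Θ → ℝ → ℝ) (hF : ∀ (θ : Θ) (t : ℝ), F θ t = ((P θ) {y | T y θ ≤ t}).toReal)
    (y : Y)
    (h : Θ → ℝ) (hdef : ∀ θ : Θ, h θ = F θ (T y θ)) (hmeas : Measurable h)
    (G : Measure Θ) [IsProbabilityMeasure G]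
    (hG : G.map h = volume.restrict (Set.Icc (0 : ℝ) 1))
    (α : ℝ) (hα : α ∈ Set.Ioo (0 : ℝ) 1)
    (S : Set ℝ) (hS : MeasurableSet S) (hSsub : S ⊆ Set.Icc (0 : ℝ) 1)
    (hcov : ENNReal.ofReal (1 - α) ≤ G {θ | h θ ∈ S}) :
    ENNReal.ofReal (1 - α) ≤ volume S ∧
    ∀ θ₀ : Θ, Measurable (fun y' => F θ₀ (T y' θ₀)) →
      (P θ₀).map (fun y' => F θ₀ (T y' θ₀)) = volume.restrict (Set.Ioo (0 : ℝ) 1) →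
      ENNReal.ofReal (1 - α) ≤ (P θ₀) {y' | F θ₀ (T y' θ₀) ∈ S} :=
  stmt_2_general P T F h hmeas G hG α S hS hSsub hcov
end

section
/- (Corollary 1, monotonicity of the observed coverage probability.) Let Θ be a measurable space, ℓ : Θ → ℝ and h : Θ → ℝ measurable functions, and X₁, X₂ two Θ-valued random variables. Assume: (C1) for all θ₁, θ₂ ∈ Θ, ℓ(θ₁) ≥ ℓ(θ₂) implies h(θ₁) ≤ h(θ₂); (C2) ℓ(X₂) first-order stochastically dominates ℓ(X₁), i.e. P(ℓ(X₂) > t) ≥ P(ℓ(X₁) > t) for all t ∈ ℝ; and the distribution of ℓ(X₁) is atomless. Then for every α ∈ (0,1), P(h(X₂) ≤ α) ≥ P(h(X₁) ≤ α). -/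
/-!
By (C1) the event `h θ ≤ α` only depends on `ℓ θ` and is upward closed in it: it is the preimage
under `ℓ` of an upper set of `ℝ`. An upper set of `ℝ` is empty, everything, or a half-line
`(t, ∞)` or `[t, ∞)`. Stochastic dominance compares the probabilities of open half-lines, and since
`ℓ (X₁ ·)` has no atom at `t`, closing the half-line does not change the probability for `X₁`.
-/

open MeasureTheory Set

lemma preimage_upperClosure_image_eq {Θ β : Type*} [Preorder β] {ℓ : Θ → β} {S : Set Θ}
    (hS : ∀ θ₁ θ₂, ℓ θ₂ ≤ ℓ θ₁ → θ₂ ∈ S → θ₁ ∈ S) :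
    ℓ ⁻¹' upperClosure (ℓ '' S) = S := by
  ext θ
  simp only [mem_preimage, SetLike.mem_coe, mem_upperClosure, mem_image, exists_exists_and_eq_and]
  exact ⟨fun ⟨θ', hθ', hle⟩ => hS θ θ' hle hθ', fun hθ => ⟨θ, hθ, le_rfl⟩⟩

lemma measure_preimage_isUpperSet_le {Ω : Type*} [MeasurableSpace Ω] (P : Measure Ω)
    {Y₁ Y₂ : Ω → ℝ} (hdom : ∀ t : ℝ, P {ω | t < Y₁ ω} ≤ P {ω | t < Y₂ ω})
    (hatomless : ∀ c : ℝ, P {ω | Y₁ ω = c} = 0) {U : Set ℝ} (hU : IsUpperSet U) :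
    P (Y₁ ⁻¹' U) ≤ P (Y₂ ⁻¹' U) := by
  rcases U.eq_empty_or_nonempty with rfl | hne
  · simp
  by_cases hbd : BddBelow U
  · set t := sInf U
    have hU_Ici : Y₁ ⁻¹' U ⊆ {ω | t < Y₁ ω} ∪ {ω | Y₁ ω = t} := fun ω hω =>
      (csInf_le hbd hω).lt_or_eq.imp id Eq.symm
    have hIoi_U : {ω | t < Y₂ ω} ⊆ Y₂ ⁻¹' U := fun ω hω => by
      obtain ⟨u, hu, hlt⟩ := exists_lt_of_csInf_lt hne hω
      exact hU hlt.le hu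
    calc P (Y₁ ⁻¹' U)
        ≤ P ({ω | t < Y₁ ω} ∪ {ω | Y₁ ω = t}) := measure_mono hU_Ici
      _ ≤ P {ω | t < Y₁ ω} + P {ω | Y₁ ω = t} := measure_union_le _ _
      _ = P {ω | t < Y₁ ω} := by rw [hatomless t, add_zero]
      _ ≤ P {ω | t < Y₂ ω} := hdom t
      _ ≤ P (Y₂ ⁻¹' U) := measure_mono hIoi_U
  · have hU_univ : U = univ := eq_univ_of_forall fun x => by
      obtain ⟨u, hu, hlt⟩ := not_bddBelow_iff.mp hbd x
      exact hU hlt.le hu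
    simp [hU_univ]

theorem stmt_5_general {Ω Θ : Type*} [MeasurableSpace Ω]
    (P : Measure Ω)
    (ℓ h : Θ → ℝ)
    (X₁ X₂ : Ω → Θ)
    (hC1 : ∀ θ₁ θ₂ : Θ, ℓ θ₂ ≤ ℓ θ₁ → h θ₁ ≤ h θ₂)
    (hC2 : ∀ t : ℝ, P {ω | t < ℓ (X₁ ω)} ≤ P {ω | t < ℓ (X₂ ω)})
    (hatomless : ∀ c : ℝ, P {ω | ℓ (X₁ ω) = c} = 0) :
    ∀ α ∈ Set.Ioo (0 : ℝ) 1, P {ω | h (X₁ ω) ≤ α} ≤ P {ω | h (X₂ ω) ≤ α} := by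
  intro α _
  have hsublevel : ℓ ⁻¹' upperClosure (ℓ '' {θ | h θ ≤ α}) = {θ | h θ ≤ α} :=
    preimage_upperClosure_image_eq fun θ₁ θ₂ hle hθ₂ => (hC1 θ₁ θ₂ hle).trans hθ₂
  have hcompare := measure_preimage_isUpperSet_le P (Y₁ := ℓ ∘ X₁) (Y₂ := ℓ ∘ X₂) hC2 hatomless
    (upperClosure (ℓ '' {θ | h θ ≤ α})).upper
  rwa [preimage_comp, preimage_comp, hsublevel] at hcompare

/-- **Corollary 1 (monotonicity of the observed coverage probability).** Suppose
(C1) `ℓ θ₁ ≥ ℓ θ₂` implies `h θ₁ ≤ h θ₂`, (C2) `ℓ (X₂ ·)` first-order stochastically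
dominates `ℓ (X₁ ·)`, and the distribution of `ℓ (X₁ ·)` is atomless. Then for every
`α ∈ (0,1)`, `P (h (X₂ ·) ≤ α) ≥ P (h (X₁ ·) ≤ α)`. -/
theorem stmt_5 {Ω Θ : Type*} [MeasurableSpace Ω] [MeasurableSpace Θ]
    (P : Measure Ω) [IsProbabilityMeasure P]
    (ℓ h : Θ → ℝ) (hℓ : Measurable ℓ) (hh : Measurable h)
    (X₁ X₂ : Ω → Θ) (hX₁ : Measurable X₁) (hX₂ : Measurable X₂)
    (hC1 : ∀ θ₁ θ₂ : Θ, ℓ θ₂ ≤ ℓ θ₁ → h θ₁ ≤ h θ₂)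
    (hC2 : ∀ t : ℝ, P {ω | t < ℓ (X₁ ω)} ≤ P {ω | t < ℓ (X₂ ω)})
    (hatomless : ∀ c : ℝ, P {ω | ℓ (X₁ ω) = c} = 0) :
    ∀ α ∈ Set.Ioo (0 : ℝ) 1, P {ω | h (X₁ ω) ≤ α} ≤ P {ω | h (X₂ ω) ≤ α} :=
  stmt_5_general P ℓ h X₁ X₂ hC1 hC2 hatomless
end
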